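/- arXiv:2005.13228 — 6 statements merged into one kernel-verified Lean document; each statement's English description precedes it below -/
import Mathlib

section
/- Under the standing assumptions (positive symmetric density and strictly increasing hazard ratio F/f), the function x ↦ (2F(x) − 1)/f(x) is strictly increasing on ℝ. -/
/-!
Since `f` is even, `x ↦ F x + F (-x)` has derivative `f x - f (-x) = 0`, so it is constant, and
the limits of `F` at `±∞` make the constant `1`. Hence `2 F x - 1 = F x - F (-x)`, and
`(2 F x - 1) / f x = F x / f x - F (-x) / f (-x)` is a strictly increasing function minus a
strictly decreasing one.
-/

open Filter Topology

theorem StrictMono.sub_comp_neg {α β : Type*} [AddCommGroup α] [PartialOrder α]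
    [IsOrderedAddMonoid α] [AddCommGroup β] [PartialOrder β] [IsOrderedAddMonoid β]
    {g : α → β} (hg : StrictMono g) : StrictMono fun x => g x - g (-x) :=
  fun _ _ h => sub_lt_sub (hg h) (hg (neg_lt_neg h))

section EvenDerivative

variable {𝕜 E : Type*} [RCLike 𝕜] [NormedAddCommGroup E] [NormedSpace 𝕜 E] {F f : 𝕜 → E}

theorem hasDerivAt_add_comp_neg_of_even (hF : ∀ x, HasDerivAt F (f x) x)
    (hf : ∀ x, f (-x) = f x) (x : 𝕜) : HasDerivAt (fun x => F x + F (-x)) 0 x := by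
  have hneg : HasDerivAt (fun x => F (-x)) ((-1 : 𝕜) • f (-x)) x :=
    (hF (-x)).scomp x (hasDerivAt_neg x)
  convert (hF x).fun_add hneg using 1
  rw [hf x, neg_one_smul, add_neg_cancel]

theorem add_comp_neg_eq_of_even (hF : ∀ x, HasDerivAt F (f x) x) (hf : ∀ x, f (-x) = f x)
    (x y : 𝕜) : F x + F (-x) = F y + F (-y) :=
  is_const_of_deriv_eq_zero (fun z => (hasDerivAt_add_comp_neg_of_even hF hf z).differentiableAt)
    (fun z => (hasDerivAt_add_comp_neg_of_even hF hf z).deriv) x y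

end EvenDerivative

theorem add_comp_neg_eq_of_even_of_tendsto {E : Type*} [NormedAddCommGroup E] [NormedSpace ℝ E]
    {F f : ℝ → E} {a b : E} (hF : ∀ x, HasDerivAt F (f x) x) (hf : ∀ x, f (-x) = f x)
    (hF_bot : Tendsto F atBot (𝓝 a)) (hF_top : Tendsto F atTop (𝓝 b)) (x : ℝ) :
    F x + F (-x) = b + a := by
  have hlim : Tendsto (fun y => F y + F (-y)) atTop (𝓝 (b + a)) :=
    hF_top.add (hF_bot.comp tendsto_neg_atTop_atBot)
  refine tendsto_nhds_unique ?_ hlim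
  exact tendsto_const_nhds.congr (add_comp_neg_eq_of_even hF hf x)

theorem two_cdf_sub_one_div_density_strictMono_general (F f : ℝ → ℝ)
    (hF_deriv : ∀ x, HasDerivAt F (f x) x)
    (hf_symm : ∀ x, f (-x) = f x)
    (hF_bot : Filter.Tendsto F Filter.atBot (nhds 0))
    (hF_top : Filter.Tendsto F Filter.atTop (nhds 1))
    (hMHR : StrictMono (fun x => F x / f x)) :
    StrictMono (fun x => (2 * F x - 1) / f x) := by
  have hsum : ∀ x, F x + F (-x) = 1 := fun x => by
    simpa using add_comp_neg_eq_of_even_of_tendsto hF_deriv hf_symm hF_bot hF_top x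
  have hsplit : (fun x => (2 * F x - 1) / f x) = fun x => F x / f x - F (-x) / f (-x) := by
    funext x
    rw [hf_symm x, ← sub_div, ← hsum x]
    ring_nf
  rw [hsplit]
  exact hMHR.sub_comp_neg

/-- Under the standing assumptions (positive symmetric
density and strictly increasing hazard ratio `F/f`), the function
`x ↦ (2 F x − 1)/f x` is strictly increasing on `ℝ`. -/
theorem two_cdf_sub_one_div_density_strictMono (F f : ℝ → ℝ)
    (hF_deriv : ∀ x, HasDerivAt F (f x) x)
    (hf_cont : Continuous f)
    (hf_pos : ∀ x, 0 < f x)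
    (hf_symm : ∀ x, f (-x) = f x)
    (hF_mono : Monotone F)
    (hF_bot : Filter.Tendsto F Filter.atBot (nhds 0))
    (hF_top : Filter.Tendsto F Filter.atTop (nhds 1))
    (hMHR : StrictMono (fun x => F x / f x)) :
    StrictMono (fun x => (2 * F x - 1) / f x) :=
  two_cdf_sub_one_div_density_strictMono_general F f hF_deriv hf_symm hF_bot hF_top hMHR
end

section
/- Under the standing assumptions (positive symmetric density and strictly increasing hazard ratio F/f), the static equilibrium profit function H(x) = (1 − F(x))²/f(x) is strictly decreasing on ℝ. -/
/-!
Symmetry of `f` makes `F` symmetric about `0`: `1 - F x = F (-x)`. Hence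
`H x = F (-x) * (F (-x) / f (-x))`, and `y ↦ F y * (F y / f y)` is strictly increasing as the
product of the increasing positive `F` and the strictly increasing nonnegative `F / f`.
-/

open Filter Topology

/-- `F x + F (-x)` has derivative `f x - f (-x) = 0`. -/
theorem add_apply_neg_eq_of_hasDerivAt_of_even {F f : ℝ → ℝ}
    (hF : ∀ x, HasDerivAt F (f x) x) (hf : ∀ x, f (-x) = f x) (x y : ℝ) :
    F x + F (-x) = F y + F (-y) := by
  have hderiv : ∀ z, HasDerivAt (fun z => F z + F (-z)) 0 z := fun z => by
    have hneg : HasDerivAt (fun z => F (-z)) (f (-z) * -1) z := (hF (-z)).comp z (hasDerivAt_neg z)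
    have hsum := (hF z).add hneg
    rwa [hf z, mul_neg_one, add_neg_cancel] at hsum
  exact is_const_of_deriv_eq_zero (fun z => (hderiv z).differentiableAt)
    (fun z => (hderiv z).deriv) x y

theorem apply_neg_eq_one_sub_of_hasDerivAt_of_even {F f : ℝ → ℝ}
    (hF : ∀ x, HasDerivAt F (f x) x) (hf : ∀ x, f (-x) = f x)
    (hF_bot : Tendsto F atBot (𝓝 0)) (hF_top : Tendsto F atTop (𝓝 1)) (x : ℝ) :
    F (-x) = 1 - F x := by
  have hlim : Tendsto (fun y => F y + F (-y)) atTop (𝓝 1) := by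
    simpa using hF_top.add (hF_bot.comp tendsto_neg_atTop_atBot)
  have hconst : (fun y => F y + F (-y)) = fun _ => F x + F (-x) :=
    funext fun y => add_apply_neg_eq_of_hasDerivAt_of_even hF hf y x
  rw [hconst] at hlim
  linarith [tendsto_nhds_unique tendsto_const_nhds hlim]

theorem StrictMono.lt_apply_of_forall_le {α β : Type*} [Preorder α] [NoMinOrder α]
    [Preorder β] {g : α → β} {b : β} (hg : StrictMono g) (h : ∀ x, b ≤ g x) (x : α) :
    b < g x := by
  obtain ⟨y, hy⟩ := exists_lt x
  exact (h y).trans_lt (hg hy)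

theorem static_profit_strictAnti_general (F f : ℝ → ℝ)
    (hF_deriv : ∀ x, HasDerivAt F (f x) x)
    (hf_pos : ∀ x, 0 < f x)
    (hf_symm : ∀ x, f (-x) = f x)
    (hF_mono : Monotone F)
    (hF_bot : Filter.Tendsto F Filter.atBot (nhds 0))
    (hF_top : Filter.Tendsto F Filter.atTop (nhds 1))
    (hMHR : StrictMono (fun x => F x / f x)) :
    StrictAnti (fun x => (1 - F x) ^ 2 / f x) := by
  have hF_nonneg : ∀ x, 0 ≤ F x := hF_mono.le_of_tendsto hF_bot
  have hF_pos : ∀ x, 0 < F x := fun x =>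
    (div_pos_iff_of_pos_right (hf_pos x)).mp
      (hMHR.lt_apply_of_forall_le (fun y => div_nonneg (hF_nonneg y) (hf_pos y).le) x)
  have hG : StrictMono (fun x => F x * (F x / f x)) :=
    hF_mono.mul_strictMono hMHR hF_pos fun x => div_nonneg (hF_nonneg x) (hf_pos x).le
  have hH : (fun x => (1 - F x) ^ 2 / f x) = (fun x => F x * (F x / f x)) ∘ Neg.neg := by
    funext x
    simp only [Function.comp_apply,
      apply_neg_eq_one_sub_of_hasDerivAt_of_even hF_deriv hf_symm hF_bot hF_top, hf_symm]
    ring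
  rw [hH]
  exact hG.comp_strictAnti fun _ _ h => neg_lt_neg h

/-- Under the standing assumptions (positive symmetric
density and strictly increasing hazard ratio `F/f`), the static
equilibrium profit function `H x = (1 − F x)² / f x` is strictly
decreasing on `ℝ`. -/
theorem static_profit_strictAnti (F f : ℝ → ℝ)
    (hF_deriv : ∀ x, HasDerivAt F (f x) x)
    (hf_cont : Continuous f)
    (hf_pos : ∀ x, 0 < f x)
    (hf_symm : ∀ x, f (-x) = f x)
    (hF_mono : Monotone F)
    (hF_bot : Filter.Tendsto F Filter.atBot (nhds 0))
    (hF_top : Filter.Tendsto F Filter.atTop (nhds 1))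
    (hMHR : StrictMono (fun x => F x / f x)) :
    StrictAnti (fun x => (1 - F x) ^ 2 / f x) :=
  static_profit_strictAnti_general F f hF_deriv hf_pos hf_symm hF_mono hF_bot hF_top hMHR
end

section
/- Suppose in addition that f is unimodal with mode 0 (f is nondecreasing on (−∞, 0] and nonincreasing on [0, ∞)). Then the function g(x) = ((1 − F(x))² + F(x)²)/f(x) is even (g(−x) = g(x) for all x), strictly increasing on [0, ∞), and strictly decreasing on (−∞, 0]; in particular g is increasing at x if and only if x > 0 and g attains its minimum at x = 0. -/
/-!
Since `f` is even, `x ↦ F x + F (-x)` has zero derivative, and its limit at `+∞` is `1 + 0`;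
hence `F (-x) = 1 - F x`, `F 0 = 1/2`, and the numerator `(1 - F x)² + F x² = 2 (F x - 1/2)² + 1/2`
is even. On `[0, ∞)` the numerator strictly increases (as `F` does, staying `≥ 1/2`) while the
positive denominator `f` does not, so `g` strictly increases there; evenness transfers this to
`(-∞, 0]` and makes `0` the minimum.
-/

open Set Filter Topology

section EvenFunction

variable {G β : Type*} [AddCommGroup G] [LinearOrder G] [IsOrderedAddMonoid G] [Preorder β]
  {g : G → β}

theorem strictAntiOn_Iic_of_even_of_strictMonoOn_Ici (h_even : ∀ x, g (-x) = g x)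
    (h_mono : StrictMonoOn g (Ici 0)) : StrictAntiOn g (Iic 0) := by
  intro x hx y hy hxy
  rw [← h_even x, ← h_even y]
  exact h_mono (neg_nonneg.2 hy) (neg_nonneg.2 hx) (neg_lt_neg hxy)

theorem le_of_even_of_monotoneOn_Ici (h_even : ∀ x, g (-x) = g x)
    (h_mono : MonotoneOn g (Ici 0)) (x : G) : g 0 ≤ g x := by
  rcases le_total 0 x with hx | hx
  · exact h_mono self_mem_Ici hx hx
  · rw [← h_even x]
    exact h_mono self_mem_Ici (neg_nonneg.2 hx) (neg_nonneg.2 hx)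

end EvenFunction

theorem StrictMonoOn.div_of_antitoneOn {α 𝕜 : Type*} [Preorder α] [Field 𝕜] [LinearOrder 𝕜]
    [IsStrictOrderedRing 𝕜] {s : Set α} {u v : α → 𝕜} (hu : StrictMonoOn u s)
    (hu_nonneg : ∀ x ∈ s, 0 ≤ u x) (hv : AntitoneOn v s) (hv_pos : ∀ x ∈ s, 0 < v x) :
    StrictMonoOn (fun x => u x / v x) s := by
  intro x hx y hy hxy
  calc u x / v x < u y / v x := div_lt_div_of_pos_right (hu hx hy hxy) (hv_pos x hx)
    _ ≤ u y / v y := div_le_div_of_nonneg_left (hu_nonneg y hy) (hv_pos y hy) (hv hx hy hxy.le)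

theorem strictMonoOn_one_sub_sq_add_sq :
    StrictMonoOn (fun a : ℝ => (1 - a) ^ 2 + a ^ 2) (Ici (1 / 2)) := by
  intro a ha b hb hab
  simp only [mem_Ici] at ha hb
  nlinarith

section SymmetricDistribution

variable {F f : ℝ → ℝ}

theorem add_comp_neg_eq_one_of_even_density (hF_deriv : ∀ x, HasDerivAt F (f x) x)
    (hf_symm : ∀ x, f (-x) = f x) (hF_bot : Tendsto F atBot (𝓝 0))
    (hF_top : Tendsto F atTop (𝓝 1)) (x : ℝ) : F x + F (-x) = 1 := by
  have h_deriv (y : ℝ) : HasDerivAt (fun z => F z + F (-z)) 0 y := by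
    have h : HasDerivAt (fun z => F z + F (-z)) (f y + f (-y) * (-1)) y :=
      (hF_deriv y).add ((hF_deriv (-y)).comp y (hasDerivAt_neg y))
    exact h.congr_deriv (by rw [hf_symm]; ring)
  have h_const : ∀ y, F y + F (-y) = F x + F (-x) := fun y =>
    is_const_of_deriv_eq_zero (fun z => (h_deriv z).differentiableAt)
      (fun z => (h_deriv z).deriv) y x
  have h_lim : Tendsto (fun y => F y + F (-y)) atTop (𝓝 1) := by
    simpa using hF_top.add (hF_bot.comp tendsto_neg_atTop_atBot)
  rw [tendsto_congr h_const] at h_lim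
  exact tendsto_nhds_unique tendsto_const_nhds h_lim

end SymmetricDistribution

theorem avg_price_static_term_general (F f : ℝ → ℝ)
    (hF_deriv : ∀ x, HasDerivAt F (f x) x)
    (hf_pos : ∀ x, 0 < f x)
    (hf_symm : ∀ x, f (-x) = f x)
    (hF_bot : Filter.Tendsto F Filter.atBot (nhds 0))
    (hF_top : Filter.Tendsto F Filter.atTop (nhds 1))
    (hf_unimodal_right : AntitoneOn f (Set.Ici 0)) :
    (∀ x : ℝ, ((1 - F (-x)) ^ 2 + (F (-x)) ^ 2) / f (-x)
        = ((1 - F x) ^ 2 + (F x) ^ 2) / f x) ∧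
    StrictMonoOn (fun x => ((1 - F x) ^ 2 + (F x) ^ 2) / f x) (Set.Ici 0) ∧
    StrictAntiOn (fun x => ((1 - F x) ^ 2 + (F x) ^ 2) / f x) (Set.Iic 0) ∧
    (∀ x : ℝ, ((1 - F 0) ^ 2 + (F 0) ^ 2) / f 0
        ≤ ((1 - F x) ^ 2 + (F x) ^ 2) / f x) := by
  have hF_neg (x : ℝ) : F (-x) = 1 - F x := by
    linarith [add_comp_neg_eq_one_of_even_density hF_deriv hf_symm hF_bot hF_top x]
  have hF_zero : F 0 = 1 / 2 := by linarith [neg_zero (G := ℝ) ▸ hF_neg 0]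
  have hF_strictMono : StrictMono F := strictMono_of_hasDerivAt_pos hF_deriv hf_pos
  have h_even (x : ℝ) : ((1 - F (-x)) ^ 2 + F (-x) ^ 2) / f (-x)
      = ((1 - F x) ^ 2 + F x ^ 2) / f x := by
    rw [hF_neg, hf_symm]; ring
  have h_num_mono : StrictMonoOn (fun x => (1 - F x) ^ 2 + F x ^ 2) (Ici 0) :=
    strictMonoOn_one_sub_sq_add_sq.comp (hF_strictMono.strictMonoOn _) fun x hx =>
      hF_zero ▸ hF_strictMono.monotone hx
  have h_mono : StrictMonoOn (fun x => ((1 - F x) ^ 2 + F x ^ 2) / f x) (Ici 0) :=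
    h_num_mono.div_of_antitoneOn (fun _ _ => by positivity) hf_unimodal_right
      fun x _ => hf_pos x
  exact ⟨h_even, h_mono, strictAntiOn_Iic_of_even_of_strictMonoOn_Ici h_even h_mono,
    le_of_even_of_monotoneOn_Ici h_even h_mono.monotoneOn⟩

/-- Suppose in addition that `f` is unimodal with mode
`0` (nondecreasing on `(−∞, 0]`, nonincreasing on `[0, ∞)`). Then
`g x = ((1 − F x)² + F x²)/f x` is even, strictly increasing on
`[0, ∞)`, strictly decreasing on `(−∞, 0]`; in particular `g` is
increasing at `x` iff `x > 0` and `g` attains its minimum at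
`x = 0`. -/
theorem avg_price_static_term (F f : ℝ → ℝ)
    (hF_deriv : ∀ x, HasDerivAt F (f x) x)
    (hf_cont : Continuous f)
    (hf_pos : ∀ x, 0 < f x)
    (hf_symm : ∀ x, f (-x) = f x)
    (hF_mono : Monotone F)
    (hF_bot : Filter.Tendsto F Filter.atBot (nhds 0))
    (hF_top : Filter.Tendsto F Filter.atTop (nhds 1))
    (hMHR : StrictMono (fun x => F x / f x))
    (hf_unimodal_left : MonotoneOn f (Set.Iic 0))
    (hf_unimodal_right : AntitoneOn f (Set.Ici 0)) :
    (∀ x : ℝ, ((1 - F (-x)) ^ 2 + (F (-x)) ^ 2) / f (-x)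
        = ((1 - F x) ^ 2 + (F x) ^ 2) / f x) ∧
    StrictMonoOn (fun x => ((1 - F x) ^ 2 + (F x) ^ 2) / f x) (Set.Ici 0) ∧
    StrictAntiOn (fun x => ((1 - F x) ^ 2 + (F x) ^ 2) / f x) (Set.Iic 0) ∧
    (∀ x : ℝ, ((1 - F 0) ^ 2 + (F 0) ^ 2) / f 0
        ≤ ((1 - F x) ^ 2 + (F x) ^ 2) / f x) :=
  avg_price_static_term_general F f hF_deriv hf_pos hf_symm hF_bot hF_top hf_unimodal_right
end

section
/- Define L(P) = P + (2F(P) − 1)/f(P) + (1 − F(P))²/f(P) − (1 − F(0))²/f(0). Under the standing assumptions, L is continuous and strictly increasing on ℝ, L(0) = 0, L(P) → −∞ as P → −∞ and L(P) → +∞ as P → +∞. Consequently, for every real number c < 0 (interpreted as the cost difference c(1) − c(0) of an experienced versus inexperienced firm) there exists a unique P with L(P) = c, and this solution satisfies P < 0. (Increasing dominance: the experienced leader's relative price P(1,0) is negative, so the leader is more likely to make the next sale.) -/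
/-- Define
`L P = P + (2 F P − 1)/f P + (1 − F P)²/f P − (1 − F 0)²/f 0`.
Under the standing assumptions, `L` is continuous and strictly
increasing, `L 0 = 0`, `L → −∞` at `−∞` and `L → +∞` at `+∞`.
Consequently, for every cost difference `c < 0` there is a unique `P`
with `L P = c`, and this solution satisfies `P < 0` (increasing
dominance). -/
theorem increasing_dominance (F f : ℝ → ℝ)
    (hF_deriv : ∀ x, HasDerivAt F (f x) x)
    (hf_cont : Continuous f)
    (hf_pos : ∀ x, 0 < f x)
    (hf_symm : ∀ x, f (-x) = f x)
    (hF_mono : Monotone F)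
    (hF_bot : Filter.Tendsto F Filter.atBot (nhds 0))
    (hF_top : Filter.Tendsto F Filter.atTop (nhds 1))
    (hMHR : StrictMono (fun x => F x / f x))
    (L : ℝ → ℝ)
    (hL : ∀ P, L P = P + (2 * F P - 1) / f P + (1 - F P) ^ 2 / f P
        - (1 - F 0) ^ 2 / f 0) :
    Continuous L ∧ StrictMono L ∧ L 0 = 0 ∧
    Filter.Tendsto L Filter.atBot Filter.atBot ∧
    Filter.Tendsto L Filter.atTop Filter.atTop ∧
    (∀ c : ℝ, c < 0 → (∃! P : ℝ, L P = c) ∧ ∀ P : ℝ, L P = c → P < 0) := by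
  have hfne : ∀ x, f x ≠ 0 := fun x => (hf_pos x).ne'
  have hF_cont : Continuous F :=
    (Differentiable.continuous fun x => (hF_deriv x).differentiableAt)
  -- symmetry: F x + F (-x) is constant
  have hG : ∀ x, F x + F (-x) = F 0 + F (-0) := by
    intro x
    have hd : ∀ y : ℝ, HasDerivAt (fun z => F z + F (-z)) 0 y := by
      intro y
      have h2 : HasDerivAt (fun z => F (-z)) (f (-y) * (-1)) y :=
        (hF_deriv (-y)).comp y (hasDerivAt_neg y)
      have := (hF_deriv y).add h2
      have hz : f y + f (-y) * (-1) = 0 := by rw [hf_symm]; ring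
      rwa [hz] at this
    exact is_const_of_deriv_eq_zero
      (fun y => (hd y).differentiableAt) (fun y => (hd y).deriv) x 0
  have hF0 : F 0 = 1 / 2 := by
    have hc : Filter.Tendsto (fun x => F x + F (-x)) Filter.atTop
        (nhds (F 0 + F (-0))) := by
      have he : (fun x : ℝ => F x + F (-x)) = fun _ => F 0 + F (-0) := funext hG
      rw [he]; exact tendsto_const_nhds
    have hc2 : Filter.Tendsto (fun x => F x + F (-x)) Filter.atTop (nhds 1) := by
      have h2 : Filter.Tendsto (fun x : ℝ => F (-x)) Filter.atTop (nhds 0) :=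
        hF_bot.comp Filter.tendsto_neg_atTop_atBot
      simpa using hF_top.add h2
    have := tendsto_nhds_unique hc hc2
    simp only [neg_zero] at this
    linarith
  have hFsm : StrictMono F := by
    apply strictMono_of_deriv_pos
    intro x; rw [(hF_deriv x).deriv]; exact hf_pos x
  have hFpos : ∀ x, 0 < F x := by
    intro x
    have h1 : (0:ℝ) ≤ F (x - 1) := by
      refine le_of_tendsto hF_bot ?_
      filter_upwards [Filter.eventually_le_atBot (x - 1)] with z hz
      exact hF_mono hz
    linarith [hFsm (show x - 1 < x by linarith)]
  have hFle1 : ∀ x, F x ≤ 1 := by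
    intro x
    refine ge_of_tendsto hF_top ?_
    filter_upwards [Filter.eventually_ge_atTop x] with z hz
    exact hF_mono hz
  -- simplified form of L
  have hL' : ∀ P, L P = P + F P ^ 2 / f P - F 0 ^ 2 / f 0 := by
    intro P
    rw [hL P, hF0]
    have h1 := hfne P
    have h2 := hfne 0
    field_simp
    ring
  have hL0 : L 0 = 0 := by rw [hL' 0]; ring
  have hLc : Continuous L := by
    have he : L = fun P => P + F P ^ 2 / f P - F 0 ^ 2 / f 0 := funext hL'
    rw [he]
    exact (continuous_id.add ((hF_cont.pow 2).div hf_cont hfne)).sub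
      continuous_const
  have hLsm : StrictMono L := by
    intro x y hxy
    rw [hL' x, hL' y]
    have h1 : F x < F y := hFsm hxy
    have h2 : F x / f x < F y / f y := hMHR hxy
    have h3 : 0 < F x := hFpos x
    have h4 : 0 ≤ F x / f x := div_nonneg h3.le (hf_pos x).le
    have key : F x ^ 2 / f x < F y ^ 2 / f y := by
      have e1 : F x ^ 2 / f x = F x * (F x / f x) := by ring
      have e2 : F y ^ 2 / f y = F y * (F y / f y) := by ring
      rw [e1, e2]
      exact mul_lt_mul'' h1 h2 h3.le h4
    linarith
  have hbot : Filter.Tendsto L Filter.atBot Filter.atBot := by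
    refine Filter.tendsto_atBot_mono' _ ?_
      (Filter.tendsto_atBot_add_const_right _ (F 0 / f 0 - F 0 ^ 2 / f 0)
        Filter.tendsto_id)
    filter_upwards [Filter.eventually_le_atBot (0:ℝ)] with P hP
    have h1 : F P / f P ≤ F 0 / f 0 := hMHR.monotone hP
    have h2 : F P ^ 2 / f P = F P * (F P / f P) := by ring
    have h3 : F P * (F P / f P) ≤ 1 * (F 0 / f 0) :=
      mul_le_mul (hFle1 P) h1 (div_nonneg (hFpos P).le (hf_pos P).le)
        zero_le_one
    rw [hL' P, h2]
    simp only [id_eq]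
    linarith
  have htop : Filter.Tendsto L Filter.atTop Filter.atTop := by
    refine Filter.tendsto_atTop_mono ?_
      (Filter.tendsto_atTop_add_const_right _ (-(F 0 ^ 2 / f 0))
        Filter.tendsto_id)
    intro P
    rw [hL' P]
    have : 0 < F P ^ 2 / f P := div_pos (pow_pos (hFpos P) 2) (hf_pos P)
    simp only [id_eq]
    linarith
  refine ⟨hLc, hLsm, hL0, hbot, htop, ?_⟩
  intro c hc
  have hsurj : Function.Surjective L := hLc.surjective htop hbot
  obtain ⟨P, hP⟩ := hsurj c
  refine ⟨⟨P, hP, fun y hy => hLsm.injective (hy.trans hP.symm)⟩, ?_⟩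
  intro Q hQ
  have hlt : L Q < L 0 := by rw [hL0, hQ]; exact hc
  exact hLsm.lt_iff_lt.mp hlt
end

section
/- Suppose in addition that f(x) → 0 as x → −∞ and as x → +∞. Define M(x) = x + (2F(x) − 1)/f(x). Then M is continuous and strictly increasing on ℝ, M → −∞ at −∞ and M → +∞ at +∞; hence for every s ∈ ℝ there exists a unique x*(s) with M(x*(s)) + s = 0 (equivalently x* = (1 − 2F(x*))/f(x*) − s). Moreover x*(0) = 0, and x*(s) < 0 whenever s > 0. -/
/-!
Since `f` is even, `F x + F (-x)` has zero derivative, and its limit at `+∞` is `1 + 0`, so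
`F (-x) = 1 - F x`. With `g = F / f` this turns the markup term into
`(2 F x - 1) / f x = g x - g (-x)`, so `M x = x + (g x - g (-x))`. The hazard-rate condition
makes `g` strictly increasing, hence `M` strictly increasing with `M x ≥ x` for `x ≥ 0` and
`M x ≤ x` for `x ≤ 0`; the rest is the intermediate value theorem.
-/

open Filter

theorem add_comp_neg_eq_of_hasDerivAt_even {F f : ℝ → ℝ} (hF : ∀ x, HasDerivAt F (f x) x)
    (hf : ∀ x, f (-x) = f x) (x : ℝ) : F x + F (-x) = F 0 + F 0 := by
  have hderiv : ∀ y, HasDerivAt (fun y => F y + F (-y)) 0 y := fun y => by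
    have := (hF y).add ((hF (-y)).comp y (hasDerivAt_neg y))
    rwa [hf y, mul_neg_one, add_neg_cancel] at this
  simpa using is_const_of_deriv_eq_zero (fun y => (hderiv y).differentiableAt)
    (fun y => (hderiv y).deriv) x 0

theorem add_comp_neg_eq_one_of_hasDerivAt_even {F f : ℝ → ℝ}
    (hF : ∀ x, HasDerivAt F (f x) x) (hf : ∀ x, f (-x) = f x)
    (hF_bot : Tendsto F atBot (nhds 0)) (hF_top : Tendsto F atTop (nhds 1)) (x : ℝ) :
    F x + F (-x) = 1 := by
  have hlim : Tendsto (fun y => F y + F (-y)) atTop (nhds (1 + 0)) :=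
    hF_top.add (hF_bot.comp tendsto_neg_atTop_atBot)
  simp only [add_comp_neg_eq_of_hasDerivAt_even hF hf] at hlim
  rw [add_comp_neg_eq_of_hasDerivAt_even hF hf, tendsto_nhds_unique tendsto_const_nhds hlim,
    add_zero]

theorem two_mul_sub_one_div_eq_div_sub_div {F f : ℝ → ℝ} {x : ℝ} (hF : F x + F (-x) = 1)
    (hf : f (-x) = f x) : (2 * F x - 1) / f x = F x / f x - F (-x) / f (-x) := by
  rw [hf, div_sub_div_same]
  congr 1
  linarith

section OddPart

variable {g : ℝ → ℝ}

theorem strictMono_add_sub_comp_neg (hg : StrictMono g) :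
    StrictMono fun x => x + (g x - g (-x)) := fun a b hab => by
  have := hg hab
  have := hg (neg_lt_neg hab)
  dsimp only
  linarith

theorem le_add_sub_comp_neg (hg : Monotone g) {x : ℝ} (hx : 0 ≤ x) :
    x ≤ x + (g x - g (-x)) := by
  have := hg (neg_le_self hx)
  linarith

theorem add_sub_comp_neg_le (hg : Monotone g) {x : ℝ} (hx : x ≤ 0) :
    x + (g x - g (-x)) ≤ x := by
  have := hg (le_neg_self_iff.mpr hx)
  linarith

theorem tendsto_add_sub_comp_neg_atTop (hg : Monotone g) :
    Tendsto (fun x => x + (g x - g (-x))) atTop atTop :=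
  tendsto_atTop_mono' _ ((eventually_ge_atTop 0).mono fun _ => le_add_sub_comp_neg hg) tendsto_id

theorem tendsto_add_sub_comp_neg_atBot (hg : Monotone g) :
    Tendsto (fun x => x + (g x - g (-x))) atBot atBot :=
  tendsto_atBot_mono' _ ((eventually_le_atBot 0).mono fun _ => add_sub_comp_neg_le hg) tendsto_id

end OddPart

theorem StrictMono.existsUnique_add_eq_zero {α β : Type*} [ConditionallyCompleteLinearOrder α]
    [TopologicalSpace α] [OrderTopology α] [DenselyOrdered α] [AddGroup β] [LinearOrder β]
    [TopologicalSpace β] [OrderClosedTopology β] {M : α → β} (hM : StrictMono M)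
    (hc : Continuous M) (htop : Tendsto M atTop atTop) (hbot : Tendsto M atBot atBot) (s : β) :
    ∃! x, M x + s = 0 := by
  simpa only [add_eq_zero_iff_eq_neg] using
    (Function.Bijective.existsUnique ⟨hM.injective, hc.surjective htop hbot⟩ (-s))

theorem switching_cost_equilibrium_exists_general (F f : ℝ → ℝ)
    (hF_deriv : ∀ x, HasDerivAt F (f x) x)
    (hf_cont : Continuous f)
    (hf_pos : ∀ x, 0 < f x)
    (hf_symm : ∀ x, f (-x) = f x)
    (hF_bot : Filter.Tendsto F Filter.atBot (nhds 0))
    (hF_top : Filter.Tendsto F Filter.atTop (nhds 1))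
    (hMHR : StrictMono (fun x => F x / f x))
    (M : ℝ → ℝ)
    (hM : ∀ x, M x = x + (2 * F x - 1) / f x) :
    Continuous M ∧ StrictMono M ∧
    Filter.Tendsto M Filter.atBot Filter.atBot ∧
    Filter.Tendsto M Filter.atTop Filter.atTop ∧
    (∀ s : ℝ, ∃! x : ℝ, M x + s = 0) ∧
    M 0 = 0 ∧
    (∀ s : ℝ, 0 < s → ∀ x : ℝ, M x + s = 0 → x < 0) := by
  have hMg : M = fun x => x + (F x / f x - F (-x) / f (-x)) := funext fun x => by
    rw [hM, two_mul_sub_one_div_eq_div_sub_div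
      (add_comp_neg_eq_one_of_hasDerivAt_even hF_deriv hf_symm hF_bot hF_top x) (hf_symm x)]
  have hCont : Continuous M := by
    have hF_cont : Continuous F :=
      continuous_iff_continuousAt.mpr fun x => (hF_deriv x).continuousAt
    rw [funext hM]
    exact continuous_id.add (((continuous_const.mul hF_cont).sub continuous_const).div
      hf_cont fun x => (hf_pos x).ne')
  have hMono : StrictMono M := hMg ▸ strictMono_add_sub_comp_neg hMHR
  have hTop : Tendsto M atTop atTop := hMg ▸ tendsto_add_sub_comp_neg_atTop hMHR.monotone
  have hBot : Tendsto M atBot atBot := hMg ▸ tendsto_add_sub_comp_neg_atBot hMHR.monotone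
  have hM0 : M 0 = 0 := by simp [hMg]
  refine ⟨hCont, hMono, hBot, hTop, hMono.existsUnique_add_eq_zero hCont hTop hBot, hM0, ?_⟩
  intro s hs x hx
  exact hMono.lt_iff_lt.mp (by rw [hM0]; linarith)

/-- Suppose in addition that `f → 0` at `±∞`. Define
`M x = x + (2 F x − 1)/f x`. Then `M` is continuous and strictly
increasing on `ℝ`, `M → −∞` at `−∞` and `M → +∞` at `+∞`; hence
for every `s` there is a unique `x*` with `M x* + s = 0`. Moreover
the solution at `s = 0` is `0` (i.e. `M 0 = 0`), and the solution is
negative whenever `s > 0`. -/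
theorem switching_cost_equilibrium_exists (F f : ℝ → ℝ)
    (hF_deriv : ∀ x, HasDerivAt F (f x) x)
    (hf_cont : Continuous f)
    (hf_pos : ∀ x, 0 < f x)
    (hf_symm : ∀ x, f (-x) = f x)
    (hF_mono : Monotone F)
    (hF_bot : Filter.Tendsto F Filter.atBot (nhds 0))
    (hF_top : Filter.Tendsto F Filter.atTop (nhds 1))
    (hMHR : StrictMono (fun x => F x / f x))
    (hf_bot : Filter.Tendsto f Filter.atBot (nhds 0))
    (hf_top : Filter.Tendsto f Filter.atTop (nhds 0))
    (M : ℝ → ℝ)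
    (hM : ∀ x, M x = x + (2 * F x - 1) / f x) :
    Continuous M ∧ StrictMono M ∧
    Filter.Tendsto M Filter.atBot Filter.atBot ∧
    Filter.Tendsto M Filter.atTop Filter.atTop ∧
    (∀ s : ℝ, ∃! x : ℝ, M x + s = 0) ∧
    M 0 = 0 ∧
    (∀ s : ℝ, 0 < s → ∀ x : ℝ, M x + s = 0 → x < 0) :=
  switching_cost_equilibrium_exists_general F f hF_deriv hf_cont hf_pos hf_symm hF_bot hF_top hMHR M
    hM
end

section
/- Let x*(s) denote the unique solution of x + (2F(x) − 1)/f(x) + s = 0 (which exists under the standing assumptions plus f → 0 at ±∞). Then s ↦ x*(s) is strictly decreasing, and consequently the insider's sale probability q(1)(s) = 1 − F(x*(s)) is strictly increasing in s. Moreover at s = 0 the market is split evenly: q(1)(0) = F(x*(0)) = 1/2. -/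
/-- Let `x* s` denote the unique solution of
`x + (2 F x − 1)/f x + s = 0`. Then `s ↦ x* s` is strictly
decreasing, hence the insider's sale probability
`q₁ s = 1 − F (x* s)` is strictly increasing in `s`. Moreover at
`s = 0` the market is split evenly: `q₁ 0 = F (x* 0) = 1/2`. -/
theorem insider_probability_increasing (F f : ℝ → ℝ)
    (hF_deriv : ∀ x, HasDerivAt F (f x) x)
    (hf_cont : Continuous f)
    (hf_pos : ∀ x, 0 < f x)
    (hf_symm : ∀ x, f (-x) = f x)
    (hF_mono : Monotone F)
    (hF_bot : Filter.Tendsto F Filter.atBot (nhds 0))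
    (hF_top : Filter.Tendsto F Filter.atTop (nhds 1))
    (hMHR : StrictMono (fun x => F x / f x))
    (hf_bot : Filter.Tendsto f Filter.atBot (nhds 0))
    (hf_top : Filter.Tendsto f Filter.atTop (nhds 0))
    (xstar : ℝ → ℝ)
    (hx : ∀ s : ℝ, xstar s + (2 * F (xstar s) - 1) / f (xstar s) + s = 0) :
    StrictAnti xstar ∧
    StrictMono (fun s => 1 - F (xstar s)) ∧
    1 - F (xstar 0) = 1 / 2 ∧ F (xstar 0) = 1 / 2 := by
  -- symmetry identity F x + F (-x) = 1
  have hH : ∀ x : ℝ, HasDerivAt (fun y => F y + F (-y)) 0 x := by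
    intro x
    have h2 : HasDerivAt (fun y : ℝ => F (-y)) (f (-x) * (-1)) x :=
      (hF_deriv (-x)).comp x (hasDerivAt_neg x)
    have := (hF_deriv x).add h2
    have h0 : f x + f (-x) * (-1) = 0 := by rw [hf_symm]; ring
    rwa [h0] at this
  have hconst : ∀ x y : ℝ, F x + F (-x) = F y + F (-y) := by
    have hdiff : Differentiable ℝ (fun y => F y + F (-y)) :=
      fun x => (hH x).differentiableAt
    have hderiv : ∀ x, deriv (fun y => F y + F (-y)) x = 0 :=
      fun x => (hH x).deriv
    exact is_const_of_deriv_eq_zero hdiff hderiv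
  have hsum : ∀ x : ℝ, F x + F (-x) = 1 := by
    have hlim : Filter.Tendsto (fun y => F y + F (-y)) Filter.atTop (nhds (1 + 0)) :=
      hF_top.add (hF_bot.comp Filter.tendsto_neg_atTop_atBot)
    have hconst0 : (fun y => F y + F (-y)) = fun _ => F 0 + F (-0) := by
      funext y; exact hconst y 0
    rw [hconst0] at hlim
    have := tendsto_nhds_unique hlim tendsto_const_nhds
    intro x
    rw [hconst x 0, ← this]; ring
  -- key rewriting
  have key : ∀ x : ℝ, (2 * F x - 1) / f x = F x / f x - F (-x) / f (-x) := by
    intro x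
    rw [hf_symm, div_sub_div_same]
    congr 1
    linarith [hsum x]
  -- G strictly monotone
  set G : ℝ → ℝ := fun x => x + (2 * F x - 1) / f x with hG
  have hGmono : StrictMono G := by
    intro a b hab
    have h1 : F a / f a < F b / f b := hMHR hab
    have h2 : F (-b) / f (-b) < F (-a) / f (-a) := hMHR (neg_lt_neg hab)
    simp only [hG, key]
    linarith
  have hGx : ∀ s : ℝ, G (xstar s) = -s := by
    intro s
    have := hx s
    simp only [hG]
    linarith
  have hanti : StrictAnti xstar := by
    intro s t hst
    have : G (xstar t) < G (xstar s) := by rw [hGx, hGx]; linarith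
    exact hGmono.lt_iff_lt.mp this
  -- F strictly monotone
  have hFs : StrictMono F := by
    apply strictMono_of_deriv_pos
    intro x
    rw [(hF_deriv x).deriv]
    exact hf_pos x
  have hq : StrictMono (fun s => 1 - F (xstar s)) := by
    intro s t hst
    have := hFs (hanti hst)
    simp only
    linarith
  -- x*(0) = 0
  have hF0 : F 0 = 1 / 2 := by have := hsum 0; simp at this; linarith
  have hG0 : G 0 = 0 := by
    simp only [hG, hF0]
    norm_num
  have hx0 : xstar 0 = 0 := by
    have h1 : G (xstar 0) = G 0 := by rw [hGx, hG0]; ring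
    exact hGmono.injective h1
  refine ⟨hanti, hq, ?_, ?_⟩ <;> rw [hx0, hF0] <;> norm_num
end
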